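/- Let m ∈ ℕ, M > 2m, and for k ∈ {1,2} let ξ_θ(x) = x_k + χ_θ(x) with χ_θ as defined by the hyperpyramid basis construction with parameter θ ∈ {0,1}^{m×m}. Then for any θ⁽¹⁾, θ⁽²⁾ ∈ {0,1}^{m×m}, the function f = (f₁, f₂) with f₁(x) = x₁ + χ_{θ⁽¹⁾}(x) and f₂(x) = x₂ + χ_{θ⁽²⁾}(x) is a bijection from I² to I². -/

import Mathlib

noncomputable section
open scoped Classical

abbrev E2 := EuclideanSpace ℝ (Fin 2)

def pt (a b : ℝ) : E2 := (WithLp.equiv 2 (Fin 2 → ℝ)).symm ![a, b]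

def Isq : Set E2 := {x | x 0 ∈ Set.Icc (-1:ℝ) 1 ∧ x 1 ∈ Set.Icc (-1:ℝ) 1}

def Phi (x : E2) : ℝ := if x ∈ Isq then Metric.infDist x (frontier Isq) else 0

def gridPt (m : ℕ) (j : Fin m) : ℝ := -1 + (2 * (j : ℝ) + 1) / m

def chi (m : ℕ) (M : ℝ) (θ : Fin m → Fin m → ℝ) (x : E2) : ℝ :=
  ∑ j₁ : Fin m, ∑ j₂ : Fin m,
    (θ j₁ j₂ / M) * Phi (pt (m * (x 0 - gridPt m j₁)) (m * (x 1 - gridPt m j₂)))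

/-! The map is `f = id + G` with `G x = (χ_{θ⁽¹⁾} x, χ_{θ⁽²⁾} x)`. The function `Φ` equals the
distance to the complement of `I²`, so it is 1-Lipschitz and each pyramid is `m`-Lipschitz; the
pyramids have pairwise disjoint supports, so `χ_θ` is `m/M`-Lipschitz and `G` is a contraction
with constant `2m/M < 1`. Hence `f` is a bijection of the whole plane. Since `χ_θ` vanishes outside
the open square, `f` fixes every point outside `I²`; and comparing with the boundary points
`(1, x₂)` and `(x₁, 1)`, where `χ_θ` vanishes, gives `χ_θ x ≤ 1 - x_k`, so `f` maps `I²` into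
itself. A bijection of the plane with these two properties restricts to a bijection of `I²`. -/

open Set Metric Function
open scoped NNReal

theorem Metric.infDist_frontier_eq_infDist_compl {E : Type*} [NormedAddCommGroup E]
    [NormedSpace ℝ E] [FiniteDimensional ℝ E] {x : E} {s : Set E} (hx : x ∈ s) (hs : s ≠ univ) :
    infDist x (frontier s) = infDist x sᶜ := by
  obtain ⟨y, hy, hxy⟩ := exists_mem_frontier_infDist_compl_eq_dist hx hs
  refine le_antisymm (hxy ▸ infDist_le_dist_of_mem hy) ?_
  rw [← infDist_closure (s := sᶜ)]
  exact infDist_le_infDist_of_subset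
    (frontier_eq_closure_inter_closure.subset.trans inter_subset_right) ⟨y, hy⟩

theorem LipschitzWith.sum_of_pairwise_disjoint_support {ι α : Type*} [Fintype ι]
    [PseudoMetricSpace α] {g : ι → α → ℝ} {K : ℝ≥0} (hg : ∀ i, LipschitzWith K (g i))
    (hg₀ : ∀ i x, 0 ≤ g i x) (hdisj : Pairwise (Disjoint on fun i => support (g i))) :
    LipschitzWith K fun x => ∑ i, g i x := by
  refine LipschitzWith.of_le_add_mul K fun x y => ?_
  by_cases hx : ∃ i, g i x ≠ 0
  · obtain ⟨i, hi⟩ := hx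
    have hsum : ∑ j, g j x = g i x := Finset.sum_eq_single i
      (fun j _ hji => notMem_support.1 fun hj =>
        Set.disjoint_left.1 (hdisj hji) hj hi) (by simp)
    calc ∑ j, g j x = g i x := hsum
      _ ≤ g i y + K * dist x y := (hg i).le_add_mul x y
      _ ≤ ∑ j, g j y + K * dist x y := by
        gcongr; exact Finset.single_le_sum (fun j _ => hg₀ j y) (Finset.mem_univ i)
  · push Not at hx
    simp only [hx, Finset.sum_const_zero]
    have := Finset.sum_nonneg fun j (_ : j ∈ Finset.univ) => hg₀ j y
    positivity

theorem LipschitzWith.bijective_id_add {E : Type*} [NormedAddCommGroup E] [NormedSpace ℝ E]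
    [CompleteSpace E] {G : E → E} {K : ℝ≥0} (hG : LipschitzWith K G) (hK : K < 1) :
    Bijective fun x => x + G x := by
  have happrox : ApproximatesLinearOn (fun x => x + G x)
      (ContinuousLinearEquiv.refl ℝ E : E →L[ℝ] E) univ K := fun x _ y _ => by
    simpa [← dist_eq_norm, add_sub_add_comm] using hG.dist_le_mul x y
  have hc : Subsingleton E ∨ K < ‖((ContinuousLinearEquiv.refl ℝ E).symm : E →L[ℝ] E)‖₊⁻¹ := by
    rcases subsingleton_or_nontrivial E with hE | hE
    · exact .inl hE
    · right; simpa using hK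
  exact ⟨injOn_univ.1 (happrox.injOn hc), happrox.surjective hc⟩

theorem Function.Bijective.bijOn_of_mapsTo_compl {α : Type*} {f : α → α} {s : Set α}
    (hf : Bijective f) (hs : MapsTo f s s) (hsc : MapsTo f sᶜ sᶜ) : BijOn f s s := by
  refine ⟨hs, hf.injective.injOn, fun y hy => ?_⟩
  obtain ⟨x, rfl⟩ := hf.surjective y
  exact ⟨x, not_not.1 fun hx => hsc hx hy, rfl⟩

@[simp] lemma pt_apply_zero (a b : ℝ) : pt a b 0 = a := rfl
@[simp] lemma pt_apply_one (a b : ℝ) : pt a b 1 = b := rfl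

lemma pt_eta (x : E2) : pt (x 0) (x 1) = x := by
  ext i; fin_cases i <;> rfl

lemma dist_eq_sqrt (x y : E2) : dist x y = √((x 0 - y 0) ^ 2 + (x 1 - y 1) ^ 2) := by
  simp [EuclideanSpace.dist_eq, Fin.sum_univ_two, Real.dist_eq, sq_abs]

theorem LipschitzWith.pt {α : Type*} [PseudoMetricSpace α] {f g : α → ℝ} {Kf Kg : ℝ≥0}
    (hf : LipschitzWith Kf f) (hg : LipschitzWith Kg g) :
    LipschitzWith (Kf + Kg) fun x => pt (f x) (g x) := by
  refine LipschitzWith.of_dist_le_mul fun x y => ?_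
  rw [dist_eq_sqrt, pt_apply_zero, pt_apply_zero, pt_apply_one, pt_apply_one, NNReal.coe_add,
    add_mul]
  have sqrt_le (a b : ℝ) : √(a ^ 2 + b ^ 2) ≤ |a| + |b| := Real.sqrt_le_iff.2
    ⟨by positivity, by nlinarith [sq_abs a, sq_abs b, abs_nonneg a, abs_nonneg b]⟩
  calc √((f x - f y) ^ 2 + (g x - g y) ^ 2) ≤ dist (f x) (f y) + dist (g x) (g y) := sqrt_le _ _
    _ ≤ Kf * dist x y + Kg * dist x y := add_le_add (hf.dist_le_mul x y) (hg.dist_le_mul x y)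

lemma interior_Isq : interior Isq = {x | x 0 ∈ Ioo (-1 : ℝ) 1 ∧ x 1 ∈ Ioo (-1 : ℝ) 1} := by
  have interior_coord (i : Fin 2) :
      interior ((· i) ⁻¹' Icc (-1 : ℝ) 1 : Set E2) = (· i) ⁻¹' Ioo (-1) 1 := by
    rw [← (PiLp.isOpenMap_apply 2 _ i).preimage_interior_eq_interior_preimage (by fun_prop),
      interior_Icc]
  exact interior_inter.trans (congrArg₂ (· ∩ ·) (interior_coord 0) (interior_coord 1))

lemma Phi_eq_infDist_compl (x : E2) : Phi x = infDist x Isqᶜ := by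
  by_cases hx : x ∈ Isq
  · have hne : Isq ≠ univ := fun h => by
      simpa [Isq] using (h ▸ mem_univ (pt 2 0) : pt 2 0 ∈ Isq)
    rw [Phi, if_pos hx, infDist_frontier_eq_infDist_compl hx hne]
  · rw [Phi, if_neg hx, infDist_zero_of_mem hx]

lemma Phi_nonneg (x : E2) : 0 ≤ Phi x :=
  Phi_eq_infDist_compl x ▸ infDist_nonneg

lemma lipschitzWith_Phi : LipschitzWith 1 Phi := by
  simpa only [← funext Phi_eq_infDist_compl] using lipschitz_infDist_pt Isqᶜ

lemma mem_interior_Isq_of_Phi_ne_zero {x : E2} (hx : Phi x ≠ 0) : x ∈ interior Isq := by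
  rw [Phi] at hx
  split_ifs at hx with hxI
  · rw [← self_sdiff_frontier]
    exact ⟨hxI, fun hfr => hx (infDist_zero_of_mem hfr)⟩
  · exact absurd rfl hx

def pyramid (m : ℕ) (j₁ j₂ : Fin m) (x : E2) : ℝ :=
  Phi (pt (m * (x 0 - gridPt m j₁)) (m * (x 1 - gridPt m j₂)))

lemma lipschitzWith_pyramid (m : ℕ) (j₁ j₂ : Fin m) : LipschitzWith m (pyramid m j₁ j₂) := by
  have h : pyramid m j₁ j₂ = Phi ∘ ((m : ℝ) • ·) ∘ (· + -pt (gridPt m j₁) (gridPt m j₂)) := by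
    funext x
    simp only [pyramid, Function.comp_apply]
    congr 1
    ext i; fin_cases i <;> simp [sub_eq_add_neg, mul_add]
  rw [h]
  simpa using lipschitzWith_Phi.comp ((lipschitzWith_smul (m : ℝ)).comp
    (isometry_add_right _).lipschitz)

lemma mul_sub_gridPt {m : ℕ} (j : Fin m) (s : ℝ) :
    m * (s - gridPt m j) = m * s + m - 2 * j - 1 := by
  have : (m : ℝ) ≠ 0 := by exact_mod_cast (Fin.pos j).ne'
  simp only [gridPt]; field_simp; ring

lemma eq_of_mul_sub_gridPt_mem_Ioo {m : ℕ} {j k : Fin m} {s : ℝ}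
    (hj : m * (s - gridPt m j) ∈ Ioo (-1 : ℝ) 1) (hk : m * (s - gridPt m k) ∈ Ioo (-1 : ℝ) 1) :
    j = k := by
  rw [mul_sub_gridPt] at hj hk
  have h₁ : (j : ℝ) < k + 1 := by linarith [hj.1, hk.2]
  have h₂ : (k : ℝ) < j + 1 := by linarith [hj.2, hk.1]
  have h₁' : (j : ℕ) < k + 1 := by exact_mod_cast h₁
  have h₂' : (k : ℕ) < j + 1 := by exact_mod_cast h₂
  exact Fin.ext (by omega)

lemma mem_Ioo_of_mul_sub_gridPt_mem_Ioo {m : ℕ} {j : Fin m} {s : ℝ}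
    (hj : m * (s - gridPt m j) ∈ Ioo (-1 : ℝ) 1) : s ∈ Ioo (-1 : ℝ) 1 := by
  rw [mul_sub_gridPt] at hj
  have hm : (0 : ℝ) < m := by exact_mod_cast Fin.pos j
  have hjm : (j : ℝ) + 1 ≤ m := by exact_mod_cast j.isLt
  have hj0 : (0 : ℝ) ≤ j := j.val.cast_nonneg
  constructor <;> nlinarith [hj.1, hj.2]

lemma mul_sub_gridPt_mem_Ioo_of_pyramid_ne_zero {m : ℕ} {j₁ j₂ : Fin m} {x : E2}
    (hx : pyramid m j₁ j₂ x ≠ 0) :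
    m * (x 0 - gridPt m j₁) ∈ Ioo (-1 : ℝ) 1 ∧ m * (x 1 - gridPt m j₂) ∈ Ioo (-1 : ℝ) 1 := by
  simpa [interior_Isq] using mem_interior_Isq_of_Phi_ne_zero hx

lemma chi_eq_sum (m : ℕ) (M : ℝ) (θ : Fin m → Fin m → ℝ) (x : E2) :
    chi m M θ x = ∑ j : Fin m × Fin m, θ j.1 j.2 / M * pyramid m j.1 j.2 x :=
  (Fintype.sum_prod_type' _).symm

section chi

variable {m : ℕ} {M : ℝ} {θ : Fin m → Fin m → ℝ}

lemma coeff_mul_pyramid_nonneg (hM : 0 < M) (hθ : ∀ j₁ j₂, θ j₁ j₂ ∈ Icc (0 : ℝ) 1)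
    (j : Fin m × Fin m) (x : E2) : 0 ≤ θ j.1 j.2 / M * pyramid m j.1 j.2 x :=
  mul_nonneg (div_nonneg (hθ j.1 j.2).1 hM.le) (Phi_nonneg _)

lemma chi_nonneg (hM : 0 < M) (hθ : ∀ j₁ j₂, θ j₁ j₂ ∈ Icc (0 : ℝ) 1) (x : E2) :
    0 ≤ chi m M θ x :=
  chi_eq_sum m M θ x ▸ Finset.sum_nonneg fun j _ => coeff_mul_pyramid_nonneg hM hθ j x

lemma support_chi_subset : support (chi m M θ) ⊆ interior Isq := fun x hx => by
  obtain ⟨j₁, -, hj₁⟩ := Finset.exists_ne_zero_of_sum_ne_zero hx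
  obtain ⟨j₂, -, hj₂⟩ := Finset.exists_ne_zero_of_sum_ne_zero hj₁
  obtain ⟨h₁, h₂⟩ := mul_sub_gridPt_mem_Ioo_of_pyramid_ne_zero (right_ne_zero_of_mul hj₂)
  rw [interior_Isq]
  exact ⟨mem_Ioo_of_mul_sub_gridPt_mem_Ioo h₁, mem_Ioo_of_mul_sub_gridPt_mem_Ioo h₂⟩

lemma lipschitzWith_chi (hM : 0 < M) (hθ : ∀ j₁ j₂, θ j₁ j₂ ∈ Icc (0 : ℝ) 1) :
    LipschitzWith (m / M).toNNReal (chi m M θ) := by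
  rw [funext (chi_eq_sum m M θ)]
  refine LipschitzWith.sum_of_pairwise_disjoint_support (fun j => ?_) (fun j x => ?_) ?_
  · refine ((lipschitzWith_smul (θ j.1 j.2 / M)).comp (lipschitzWith_pyramid m j.1 j.2)).weaken ?_
    rw [← NNReal.coe_le_coe, NNReal.coe_mul, coe_nnnorm, Real.coe_toNNReal _ (by positivity),
      Real.norm_of_nonneg (div_nonneg (hθ j.1 j.2).1 hM.le), NNReal.coe_natCast, div_mul_comm]
    exact mul_le_of_le_one_right (by positivity) (hθ j.1 j.2).2
  · exact coeff_mul_pyramid_nonneg hM hθ j x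
  · intro j k hjk
    refine Set.disjoint_left.2 fun x hj hk => hjk ?_
    obtain ⟨hj₁, hj₂⟩ := mul_sub_gridPt_mem_Ioo_of_pyramid_ne_zero (right_ne_zero_of_mul hj)
    obtain ⟨hk₁, hk₂⟩ := mul_sub_gridPt_mem_Ioo_of_pyramid_ne_zero (right_ne_zero_of_mul hk)
    exact Prod.ext (eq_of_mul_sub_gridPt_mem_Ioo hj₁ hk₁) (eq_of_mul_sub_gridPt_mem_Ioo hj₂ hk₂)

lemma add_chi_mem_Icc (hM : 0 < M) (hmM : (m : ℝ) ≤ M) (hθ : ∀ j₁ j₂, θ j₁ j₂ ∈ Icc (0 : ℝ) 1)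
    {x : E2} (hx : x ∈ Isq) :
    x 0 + chi m M θ x ∈ Icc (-1 : ℝ) 1 ∧ x 1 + chi m M θ x ∈ Icc (-1 : ℝ) 1 := by
  have hmM' : (m : ℝ) / M ≤ 1 := div_le_one_of_le₀ hmM hM.le
  have le_dist (z : E2) (hz : z ∉ interior Isq) : chi m M θ x ≤ m / M * dist x z := by
    have h := (lipschitzWith_chi hM hθ).le_add_mul x z
    rwa [notMem_support.1 (mt (@support_chi_subset _ M θ z) hz), zero_add,
      Real.coe_toNNReal _ (by positivity)] at h
  have h₀ := le_dist (pt 1 (x 1)) (by simp [interior_Isq])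
  have h₁ := le_dist (pt (x 0) 1) (by simp [interior_Isq])
  simp only [dist_eq_sqrt, pt_apply_zero, pt_apply_one, sub_self, ne_eq, OfNat.ofNat_ne_zero,
    not_false_eq_true, zero_pow, add_zero, zero_add, Real.sqrt_sq_eq_abs] at h₀ h₁
  rw [abs_of_nonpos (by linarith [hx.1.2])] at h₀
  rw [abs_of_nonpos (by linarith [hx.2.2])] at h₁
  have := chi_nonneg hM hθ x
  refine ⟨⟨by linarith [hx.1.1], ?_⟩, ⟨by linarith [hx.2.1], ?_⟩⟩ <;> nlinarith [hx.1.2, hx.2.2]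

end chi

theorem stmt_7 (m : ℕ) (M : ℝ) (hM : 2 * (m : ℝ) < M)
    (θ₁ θ₂ : Fin m → Fin m → ℝ)
    (hθ₁ : ∀ j₁ j₂, θ₁ j₁ j₂ = 0 ∨ θ₁ j₁ j₂ = 1)
    (hθ₂ : ∀ j₁ j₂, θ₂ j₁ j₂ = 0 ∨ θ₂ j₁ j₂ = 1) :
    Set.BijOn (fun x => pt (x 0 + chi m M θ₁ x) (x 1 + chi m M θ₂ x)) Isq Isq := by
  have hM₀ : 0 < M := by linarith [m.cast_nonneg (α := ℝ)]
  have mem_unit {θ : Fin m → Fin m → ℝ} (hθ : ∀ j₁ j₂, θ j₁ j₂ = 0 ∨ θ j₁ j₂ = 1)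
      (j₁ j₂ : Fin m) : θ j₁ j₂ ∈ Icc (0 : ℝ) 1 := by
    rcases hθ j₁ j₂ with h | h <;> simp [h]
  have hK : (m / M).toNNReal + (m / M).toNNReal < 1 := by
    rw [← NNReal.coe_lt_coe, NNReal.coe_add, Real.coe_toNNReal _ (by positivity), ← two_mul,
      NNReal.coe_one, ← mul_div_assoc, div_lt_one hM₀]
    exact hM
  have hG := (lipschitzWith_chi hM₀ (mem_unit hθ₁)).pt (lipschitzWith_chi hM₀ (mem_unit hθ₂))
  have hF (x : E2) : pt (x 0 + chi m M θ₁ x) (x 1 + chi m M θ₂ x) =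
      x + pt (chi m M θ₁ x) (chi m M θ₂ x) := by
    ext i; fin_cases i <;> rfl
  have hbij : Bijective fun x => pt (x 0 + chi m M θ₁ x) (x 1 + chi m M θ₂ x) := by
    simpa only [hF] using hG.bijective_id_add hK
  refine hbij.bijOn_of_mapsTo_compl (fun x hx => ?_) (fun x hx => ?_)
  · exact ⟨(add_chi_mem_Icc hM₀ (by linarith) (mem_unit hθ₁) hx).1,
      (add_chi_mem_Icc hM₀ (by linarith) (mem_unit hθ₂) hx).2⟩
  · have vanish {θ : Fin m → Fin m → ℝ} : chi m M θ x = 0 :=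
      notMem_support.1 fun h => hx (interior_subset (support_chi_subset h))
    simpa [vanish, pt_eta] using hx
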